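/- arXiv:2105.14655 — 3 statements merged into one kernel-verified Lean document; each statement's English description precedes it below -/
import Mathlib

section
/- Equivariance of the block convolution module under local unitary basis transformations: let N : ℕ, let ι₀ be a finite type and κ : Fin N → Type a family of finite types, let U₀ ∈ Matrix.unitaryGroup ι₀ ℂ and U j ∈ Matrix.unitaryGroup (κ j) ℂ for each j : Fin N, let T : ι₀ → ((j : Fin N) → κ j) → ℂ be a tensor block and h : (j : Fin N) → (κ j → ℂ) a family of feature vectors. Define the convolution conv T h : ι₀ → ℂ by conv T h a = ∑ over v : (j : Fin N) → κ j of T a v * ∏ j, star (h j (v j)); define the transformed tensor T' a v = ∑ over a' : ι₀ and v' : (j : Fin N) → κ j of (U₀ a a') * (∏ j, (U j) (v j) (v' j)) * T a' v', and the transformed features h' j = (U j).mulVec (h j). Then conv T' h' = U₀.mulVec (conv T h). -/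
open scoped BigOperators

/-- The block convolution: contract all but the first slot of the tensor block `T`
against complex-conjugated feature vectors. -/
noncomputable def blockConv {N : ℕ} {ι₀ : Type} {κ : Fin N → Type}
    [Fintype ι₀] [∀ j, Fintype (κ j)]
    (T : ι₀ → ((j : Fin N) → κ j) → ℂ) (h : (j : Fin N) → κ j → ℂ) : ι₀ → ℂ :=
  fun a => ∑ v : (j : Fin N) → κ j, T a v * ∏ j, star (h j (v j))

lemma key_unitary {κ : Type} [Fintype κ] [DecidableEq κ]
    (M : Matrix κ κ ℂ) (hM : M ∈ Matrix.unitaryGroup κ ℂ)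
    (h : κ → ℂ) (b : κ) :
    ∑ x, M x b * star (M.mulVec h x) = star (h b) := by
  have h1 : star M * M = 1 := hM.1
  have hentry : ∀ w : κ, (∑ x, M x b * star (M x w)) = if w = b then 1 else 0 := by
    intro w
    have := congrArg (fun A : Matrix κ κ ℂ => A w b) h1
    simp only [Matrix.mul_apply, Matrix.star_apply, Matrix.one_apply] at this
    rw [← this]
    exact Finset.sum_congr rfl fun x _ => by ring
  calc ∑ x, M x b * star (M.mulVec h x)
      = ∑ x, ∑ w, M x b * (star (M x w) * star (h w)) := by
        refine Finset.sum_congr rfl fun x _ => ?_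
        simp [Matrix.mulVec, dotProduct, star_sum, Finset.mul_sum]
    _ = ∑ w, (∑ x, M x b * star (M x w)) * star (h w) := by
        rw [Finset.sum_comm]
        refine Finset.sum_congr rfl fun w _ => ?_
        rw [Finset.sum_mul]
        exact Finset.sum_congr rfl fun x _ => by ring
    _ = star (h b) := by
        simp only [hentry]
        simp

/-- Equivariance of the block convolution module under local unitary basis
transformations: transforming the tensor block by `U₀ ⊗ U 0 ⊗ ⋯ ⊗ U (N-1)` and the
feature vectors by the `U j` transforms the convolution output by `U₀`. -/
theorem blockConv_equivariant (N : ℕ) (ι₀ : Type) [Fintype ι₀] [DecidableEq ι₀]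
    (κ : Fin N → Type) [∀ j, Fintype (κ j)] [∀ j, DecidableEq (κ j)]
    (U₀ : Matrix ι₀ ι₀ ℂ) (hU₀ : U₀ ∈ Matrix.unitaryGroup ι₀ ℂ)
    (U : (j : Fin N) → Matrix (κ j) (κ j) ℂ)
    (hU : ∀ j, U j ∈ Matrix.unitaryGroup (κ j) ℂ)
    (T : ι₀ → ((j : Fin N) → κ j) → ℂ) (h : (j : Fin N) → κ j → ℂ) :
    blockConv
      (fun a v => ∑ a' : ι₀, ∑ v' : (j : Fin N) → κ j,
        U₀ a a' * (∏ j, U j (v j) (v' j)) * T a' v')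
      (fun j => (U j).mulVec (h j))
    = U₀.mulVec (blockConv T h) := by
  funext a
  simp only [blockConv, Matrix.mulVec, dotProduct]
  calc
    ∑ v : (j : Fin N) → κ j,
        (∑ a' : ι₀, ∑ v' : (j : Fin N) → κ j,
          U₀ a a' * (∏ j, U j (v j) (v' j)) * T a' v')
          * ∏ j, star ((U j).mulVec (h j) (v j))
      = ∑ a' : ι₀, ∑ v' : (j : Fin N) → κ j, U₀ a a' * T a' v' *
          ∑ v : (j : Fin N) → κ j, ∏ j, (U j (v j) (v' j) * star ((U j).mulVec (h j) (v j))) := by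
        simp only [Finset.sum_mul]
        rw [Finset.sum_comm]
        refine Finset.sum_congr rfl fun a' _ => ?_
        rw [Finset.sum_comm]
        refine Finset.sum_congr rfl fun v' _ => ?_
        rw [Finset.mul_sum]
        refine Finset.sum_congr rfl fun v _ => ?_
        rw [Finset.prod_mul_distrib]
        ring
    _ = ∑ a' : ι₀, U₀ a a' * ∑ v' : (j : Fin N) → κ j, T a' v' * ∏ j, star (h j (v' j)) := by
        refine Finset.sum_congr rfl fun a' _ => ?_
        rw [Finset.mul_sum]
        refine Finset.sum_congr rfl fun v' _ => ?_
        rw [← Fintype.prod_sum (fun j x => U j x (v' j) * star ((U j).mulVec (h j) x))]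
        have : ∀ j, (∑ x, U j x (v' j) * star ((U j).mulVec (h j) x)) = star (h j (v' j)) :=
          fun j => key_unitary (U j) (hU j) (h j) (v' j)
        rw [Finset.prod_congr rfl fun j _ => this j]
        ring
end

section
/- Equivariance of the message-passing aggregation under local unitary basis transformations with invariant attention weights: let P be a finite type of points, κ : P → Type a family of finite types, and g : (u : P) → Matrix.unitaryGroup (κ u) ℂ a family of unitary matrices. Fix N : ℕ and a point u₀ : P. Let T : (u⃗ : Fin N → P) → κ u₀ → (((j : Fin N) → κ (u⃗ j)) → ℂ) be a family of tensor blocks with leading slot at u₀, let α : (Fin N → P) → ℂ be attention weights, and h : (u : P) → κ u → ℂ feature vectors. Define the aggregated message m̃ : κ u₀ → ℂ by m̃ a = ∑ over u⃗ : Fin N → P of α u⃗ * (∑ over v : (j : Fin N) → κ (u⃗ j) of T u⃗ a v * ∏ j, star (h (u⃗ j) (v j))). Define the transformed blocks T' u⃗ a v = ∑ over a' : κ u₀ and v' of ((g u₀) a a') * (∏ j, (g (u⃗ j)) (v j) (v' j)) * T u⃗ a' v', transformed features h' u = (g u).mulVec (h u), and keep the same weights α. Then the aggregated message m̃' built from T',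 h', α satisfies m̃' = (g u₀).mulVec m̃. -/
open scoped BigOperators

/-- The aggregated message at a point `u₀`: sum over all `N`-tuples of points `u⃗` of
the attention weight `α u⃗` times the block convolution of the tensor block `T u⃗`
against complex-conjugated feature vectors at the points of `u⃗`. -/
noncomputable def aggMessage {P : Type} [Fintype P] {κ : P → Type} [∀ u, Fintype (κ u)]
    {N : ℕ} {u₀ : P}
    (T : (u : Fin N → P) → κ u₀ → (((j : Fin N) → κ (u j)) → ℂ))
    (α : (Fin N → P) → ℂ) (h : (u : P) → κ u → ℂ) : κ u₀ → ℂ :=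
  fun a => ∑ u : Fin N → P, α u *
    ∑ v : (j : Fin N) → κ (u j), T u a v * ∏ j, star (h (u j) (v j))

lemma unitary_key {ι : Type} [Fintype ι] [DecidableEq ι]
    (U : Matrix ι ι ℂ) (hU : U ∈ Matrix.unitaryGroup ι ℂ) (h : ι → ℂ) (c : ι) :
    ∑ b, U b c * star (U.mulVec h b) = star (h c) := by
  have h1 : star U * U = 1 := hU.1
  have h2 : ∀ w, ∑ b, star (U b w) * U b c = (1 : Matrix ι ι ℂ) w c := by
    intro w
    rw [← h1]
    simp [Matrix.mul_apply, Matrix.conjTranspose_apply]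
  calc ∑ b, U b c * star (U.mulVec h b)
      = ∑ b, ∑ w, star (h w) * (star (U b w) * U b c) := by
        simp [Matrix.mulVec, dotProduct, star_sum, Finset.mul_sum]
        congr 1; ext b; congr 1; ext w; ring
    _ = ∑ w, star (h w) * ∑ b, star (U b w) * U b c := by
        rw [Finset.sum_comm]; simp [Finset.mul_sum]
    _ = star (h c) := by
        simp only [h2, Matrix.one_apply]
        simp [Finset.sum_ite_eq, mul_ite]

lemma inner_eq (P : Type) [Fintype P]
    (κ : P → Type) [∀ u, Fintype (κ u)] [∀ u, DecidableEq (κ u)]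
    (g : (u : P) → Matrix (κ u) (κ u) ℂ)
    (hg : ∀ u, g u ∈ Matrix.unitaryGroup (κ u) ℂ)
    (N : ℕ) (u₀ : P)
    (T : (u : Fin N → P) → κ u₀ → (((j : Fin N) → κ (u j)) → ℂ))
    (h : (u : P) → κ u → ℂ) (u : Fin N → P) (a : κ u₀) :
    ∑ v : (j : Fin N) → κ (u j),
      (∑ a' : κ u₀, ∑ v' : (j : Fin N) → κ (u j),
        (g u₀) a a' * (∏ j, (g (u j)) (v j) (v' j)) * T u a' v') *
      ∏ j, star ((g (u j)).mulVec (h (u j)) (v j))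
    = ∑ a' : κ u₀, (g u₀) a a' *
        ∑ v' : (j : Fin N) → κ (u j), T u a' v' * ∏ j, star (h (u j) (v' j)) := by
  calc ∑ v : (j : Fin N) → κ (u j),
      (∑ a' : κ u₀, ∑ v' : (j : Fin N) → κ (u j),
        (g u₀) a a' * (∏ j, (g (u j)) (v j) (v' j)) * T u a' v') *
      ∏ j, star ((g (u j)).mulVec (h (u j)) (v j))
      = ∑ v : (j : Fin N) → κ (u j), ∑ a' : κ u₀, ∑ v' : (j : Fin N) → κ (u j),
          (g u₀ a a' * T u a' v') *
          ∏ j, (g (u j)) (v j) (v' j) * star ((g (u j)).mulVec (h (u j)) (v j)) := by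
        simp only [Finset.sum_mul, Finset.prod_mul_distrib]
        congr 1; ext v; congr 1; ext a'; congr 1; ext v'; ring
    _ = ∑ a' : κ u₀, ∑ v' : (j : Fin N) → κ (u j),
          (g u₀ a a' * T u a' v') *
          ∑ v : (j : Fin N) → κ (u j),
            ∏ j, (g (u j)) (v j) (v' j) * star ((g (u j)).mulVec (h (u j)) (v j)) := by
        rw [Finset.sum_comm]
        congr 1; ext a'
        rw [Finset.sum_comm]
        simp [Finset.mul_sum]
    _ = ∑ a' : κ u₀, ∑ v' : (j : Fin N) → κ (u j),
          (g u₀ a a' * T u a' v') * ∏ j, star (h (u j) (v' j)) := by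
        congr 1; ext a'; congr 1; ext v'
        congr 1
        rw [← Fintype.prod_sum fun j b => (g (u j)) b (v' j) * star ((g (u j)).mulVec (h (u j)) b)]
        exact Finset.prod_congr rfl fun j _ => unitary_key _ (hg (u j)) _ _
    _ = ∑ a' : κ u₀, (g u₀) a a' *
          ∑ v' : (j : Fin N) → κ (u j), T u a' v' * ∏ j, star (h (u j) (v' j)) := by
        simp [Finset.mul_sum, mul_assoc]


private theorem main (P : Type) [Fintype P]
    (κ : P → Type) [∀ u, Fintype (κ u)] [∀ u, DecidableEq (κ u)]
    (g : (u : P) → Matrix (κ u) (κ u) ℂ)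
    (hg : ∀ u, g u ∈ Matrix.unitaryGroup (κ u) ℂ)
    (N : ℕ) (u₀ : P)
    (T : (u : Fin N → P) → κ u₀ → (((j : Fin N) → κ (u j)) → ℂ))
    (α : (Fin N → P) → ℂ) (h : (u : P) → κ u → ℂ) :
    (fun a => ∑ u : Fin N → P, α u *
      ∑ v : (j : Fin N) → κ (u j),
        (∑ a' : κ u₀, ∑ v' : (j : Fin N) → κ (u j),
          (g u₀) a a' * (∏ j, (g (u j)) (v j) (v' j)) * T u a' v') *
        ∏ j, star ((g (u j)).mulVec (h (u j)) (v j)))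
    = (g u₀).mulVec (fun a => ∑ u : Fin N → P, α u *
        ∑ v : (j : Fin N) → κ (u j), T u a v * ∏ j, star (h (u j) (v j))) := by
  funext a
  simp only [inner_eq P κ g hg N u₀ T h]
  rw [Matrix.mulVec, dotProduct]
  simp only [Finset.mul_sum]
  rw [Finset.sum_comm]
  congr 1; ext a'; congr 1; ext u; congr 1; ext v
  ring


/-- Equivariance of the message-passing aggregation under local unitary basis
transformations with invariant attention weights: transforming each tensor block by
`g u₀ ⊗ g (u⃗ 0) ⊗ ⋯ ⊗ g (u⃗ (N-1))` and the features by the `g u`, while keeping the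
scalar attention weights fixed, transforms the aggregated message by `g u₀`. -/
theorem aggMessage_equivariant (P : Type) [Fintype P]
    (κ : P → Type) [∀ u, Fintype (κ u)] [∀ u, DecidableEq (κ u)]
    (g : (u : P) → Matrix (κ u) (κ u) ℂ)
    (hg : ∀ u, g u ∈ Matrix.unitaryGroup (κ u) ℂ)
    (N : ℕ) (u₀ : P)
    (T : (u : Fin N → P) → κ u₀ → (((j : Fin N) → κ (u j)) → ℂ))
    (α : (Fin N → P) → ℂ) (h : (u : P) → κ u → ℂ) :
    aggMessage
      (fun u a v => ∑ a' : κ u₀, ∑ v' : (j : Fin N) → κ (u j),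
        (g u₀) a a' * (∏ j, (g (u j)) (v j) (v' j)) * T u a' v')
      α
      (fun u => (g u).mulVec (h u))
    = (g u₀).mulVec (aggMessage T α h) := by
  unfold aggMessage
  exact main P κ g hg N u₀ T α h
end

section
/- Equivariance of the point-wise interaction coupling (Eq. S38): let L be a finite type of representation labels with dimension index types ι : L → Type, each finite; let U : (l : L) → Matrix.unitaryGroup (ι l) ℂ be a family of unitary matrices and C : (l l₁ l₂ : L) → (ι l → ι l₁ → ι l₂ → ℂ) a family of Clebsch–Gordan coefficients satisfying, for all l, l₁, l₂, M, M₁, M₂: ∑ over M₁' : ι l₁, M₂' : ι l₂ of C l l₁ l₂ M M₁' M₂' * (U l₁) M₁' M₁ * (U l₂) M₂' M₂ = ∑ over M' : ι l of (U l) M M' * C l l₁ l₂ M' M₁ M₂. For features f, g : (l : L) → ι l → ℂ define q f g : (l : L) → ι l → ℂ by (q f g) l M = g l M + ∑ over l₁ l₂ : L, M₁ : ι l₁, M₂ : ι l₂ of f l₁ M₁ * g l₂ M₂ * C l l₁ l₂ M M₁ M₂. Then for all f, g and every l : L, (q (fun l' => (U l').mulVec (f l')) (fun l' => (U l').mulVec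 (g l'))) l = (U l).mulVec ((q f g) l). -/
open scoped BigOperators


private lemma swap3 {α β γ : Type*} [Fintype α] [Fintype β] [Fintype γ]
    (F : α → β → γ → ℂ) :
    ∑ a, ∑ b, ∑ c, F a b c = ∑ c, ∑ a, ∑ b, F a b c := by
  calc ∑ a, ∑ b, ∑ c, F a b c
      = ∑ a, ∑ c, ∑ b, F a b c :=
        Finset.sum_congr rfl fun a _ => Finset.sum_comm
    _ = ∑ c, ∑ a, ∑ b, F a b c := Finset.sum_comm

private lemma swap4 {α β γ δ : Type*} [Fintype α] [Fintype β] [Fintype γ] [Fintype δ]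
    (F : α → β → γ → δ → ℂ) :
    ∑ a, ∑ b, ∑ c, ∑ d, F a b c d = ∑ c, ∑ d, ∑ a, ∑ b, F a b c d := by
  calc ∑ a, ∑ b, ∑ c, ∑ d, F a b c d
      = ∑ c, ∑ a, ∑ b, ∑ d, F a b c d := swap3 _
    _ = ∑ c, ∑ d, ∑ a, ∑ b, F a b c d :=
        Finset.sum_congr rfl fun c _ => swap3 _

/-- The point-wise interaction coupling: a residual term plus Clebsch–Gordan coupling
of two label-indexed features `f` and `g`. -/
noncomputable def pwCoupling {L : Type} [Fintype L] {ι : L → Type} [∀ l, Fintype (ι l)]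
    (C : (l l₁ l₂ : L) → ι l → ι l₁ → ι l₂ → ℂ)
    (f g : (l : L) → ι l → ℂ) : (l : L) → ι l → ℂ :=
  fun l M => g l M +
    ∑ l₁ : L, ∑ l₂ : L, ∑ M₁ : ι l₁, ∑ M₂ : ι l₂,
      f l₁ M₁ * g l₂ M₂ * C l l₁ l₂ M M₁ M₂

/-- Equivariance of the point-wise interaction coupling: if the Clebsch–Gordan
coefficients `C` intertwine the tensor product of the unitary representations `U l₁`,
`U l₂` with `U l`, then transforming both input features block-wise by the `U l'`
transforms each output block by `U l`. -/
theorem pwCoupling_equivariant (L : Type) [Fintype L]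
    (ι : L → Type) [∀ l, Fintype (ι l)] [∀ l, DecidableEq (ι l)]
    (U : (l : L) → Matrix (ι l) (ι l) ℂ)
    (hU : ∀ l, U l ∈ Matrix.unitaryGroup (ι l) ℂ)
    (C : (l l₁ l₂ : L) → ι l → ι l₁ → ι l₂ → ℂ)
    (hC : ∀ (l l₁ l₂ : L) (M : ι l) (M₁ : ι l₁) (M₂ : ι l₂),
      ∑ M₁' : ι l₁, ∑ M₂' : ι l₂, C l l₁ l₂ M M₁' M₂' * (U l₁) M₁' M₁ * (U l₂) M₂' M₂
        = ∑ M' : ι l, (U l) M M' * C l l₁ l₂ M' M₁ M₂)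
    (f g : (l : L) → ι l → ℂ) (l : L) :
    pwCoupling C (fun l' => (U l').mulVec (f l')) (fun l' => (U l').mulVec (g l')) l
      = (U l).mulVec (pwCoupling C f g l) := by
  funext M
  have key : ∀ l₁ l₂ : L,
      (∑ M₁ : ι l₁, ∑ M₂ : ι l₂,
        (∑ a, U l₁ M₁ a * f l₁ a) * (∑ b, U l₂ M₂ b * g l₂ b) * C l l₁ l₂ M M₁ M₂)
      = ∑ M' : ι l, U l M M' *
          ∑ M₁ : ι l₁, ∑ M₂ : ι l₂, f l₁ M₁ * g l₂ M₂ * C l l₁ l₂ M' M₁ M₂ := by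
    intro l₁ l₂
    calc
      (∑ M₁ : ι l₁, ∑ M₂ : ι l₂,
          (∑ a, U l₁ M₁ a * f l₁ a) * (∑ b, U l₂ M₂ b * g l₂ b) * C l l₁ l₂ M M₁ M₂)
        = ∑ M₁ : ι l₁, ∑ M₂ : ι l₂, ∑ a, ∑ b,
            f l₁ a * g l₂ b * (C l l₁ l₂ M M₁ M₂ * U l₁ M₁ a * U l₂ M₂ b) := by
          refine Finset.sum_congr rfl fun M₁ _ => Finset.sum_congr rfl fun M₂ _ => ?_
          simp only [Finset.sum_mul, Finset.mul_sum]
          rw [Finset.sum_comm]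
          exact Finset.sum_congr rfl fun a _ => Finset.sum_congr rfl fun b _ => by ring
      _ = ∑ a, ∑ b, ∑ M₁ : ι l₁, ∑ M₂ : ι l₂,
            f l₁ a * g l₂ b * (C l l₁ l₂ M M₁ M₂ * U l₁ M₁ a * U l₂ M₂ b) := swap4 _
      _ = ∑ a, ∑ b, f l₁ a * g l₂ b *
            ∑ M₁ : ι l₁, ∑ M₂ : ι l₂, C l l₁ l₂ M M₁ M₂ * U l₁ M₁ a * U l₂ M₂ b := by
          simp only [Finset.mul_sum]
      _ = ∑ a, ∑ b, f l₁ a * g l₂ b * ∑ M', U l M M' * C l l₁ l₂ M' a b := by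
          simp only [hC]
      _ = ∑ a, ∑ b, ∑ M', U l M M' * (f l₁ a * g l₂ b * C l l₁ l₂ M' a b) := by
          simp only [Finset.mul_sum]
          exact Finset.sum_congr rfl fun a _ => Finset.sum_congr rfl fun b _ =>
            Finset.sum_congr rfl fun M' _ => by ring
      _ = ∑ M', ∑ a, ∑ b, U l M M' * (f l₁ a * g l₂ b * C l l₁ l₂ M' a b) := swap3 _
      _ = ∑ M', U l M M' *
            ∑ M₁ : ι l₁, ∑ M₂ : ι l₂, f l₁ M₁ * g l₂ M₂ * C l l₁ l₂ M' M₁ M₂ := by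
          simp only [Finset.mul_sum]
  simp only [pwCoupling, Matrix.mulVec, dotProduct, mul_add, Finset.sum_add_distrib]
  congr 1
  calc
    (∑ l₁ : L, ∑ l₂ : L, ∑ M₁ : ι l₁, ∑ M₂ : ι l₂,
        (∑ a, U l₁ M₁ a * f l₁ a) * (∑ b, U l₂ M₂ b * g l₂ b) * C l l₁ l₂ M M₁ M₂)
      = ∑ l₁ : L, ∑ l₂ : L, ∑ M' : ι l, U l M M' *
          ∑ M₁ : ι l₁, ∑ M₂ : ι l₂, f l₁ M₁ * g l₂ M₂ * C l l₁ l₂ M' M₁ M₂ :=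
        Finset.sum_congr rfl fun l₁ _ => Finset.sum_congr rfl fun l₂ _ => key l₁ l₂
    _ = ∑ M' : ι l, ∑ l₁ : L, ∑ l₂ : L, U l M M' *
          ∑ M₁ : ι l₁, ∑ M₂ : ι l₂, f l₁ M₁ * g l₂ M₂ * C l l₁ l₂ M' M₁ M₂ := swap3 _
    _ = ∑ M' : ι l, U l M M' *
          ∑ l₁ : L, ∑ l₂ : L, ∑ M₁ : ι l₁, ∑ M₂ : ι l₂,
            f l₁ M₁ * g l₂ M₂ * C l l₁ l₂ M' M₁ M₂ := by
        simp only [Finset.mul_sum]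
end
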